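/- arXiv:2605.13463 — 4 statements merged into one kernel-verified Lean document; each statement's English description precedes it below -/
import Mathlib

section
/- Let X be the Darboux–Halphen vector field on ℝ³ and let M(x) = 1/(4(x₂ − x₃)(x₁ − x₃)(x₁ − x₂)). Then at every point of the open set where (x₂ − x₃)(x₁ − x₃)(x₁ − x₂) ≠ 0 one has X(M) = 2(x₁ + x₂ + x₃)·M. -/
/-- Partial derivative ∂ᵢf at x of a function on ℝⁿ (modeled as `Fin n → ℝ`). -/
noncomputable def pd {n : ℕ} (f : (Fin n → ℝ) → ℝ) (i : Fin n) (x : Fin n → ℝ) : ℝ :=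
  fderiv ℝ f x (Pi.single i 1)

/-- Directional derivative X(f) = Σⱼ Xⱼ ∂ⱼf of f along the vector field X. -/
noncomputable def lieD {n : ℕ} (X : Fin n → (Fin n → ℝ) → ℝ) (f : (Fin n → ℝ) → ℝ)
    (x : Fin n → ℝ) : ℝ :=
  ∑ j, X j x * pd f j x

/-- The Darboux–Halphen vector field on ℝ³ (0-indexed coordinates). -/
noncomputable def DH : Fin 3 → (Fin 3 → ℝ) → ℝ :=
  ![fun x => x 1 * x 2 - x 0 * (x 1 + x 2),
    fun x => x 0 * x 2 - x 1 * (x 0 + x 2),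
    fun x => x 0 * x 1 - x 2 * (x 0 + x 1)]


/-!
Each factor `x i - x j` of the denominator is a Darboux polynomial of the Darboux–Halphen field:
`X(x i - x j) = X i - X j = -2 x k (x i - x j)`, with `k` the remaining index. Cofactors add under
products, are unchanged by constant factors and change sign under `1 / ·`, so `M` has cofactor
`2 (x 0 + x 1 + x 2)`.
-/

section LieDerivative

variable {n : ℕ} (X : Fin n → (Fin n → ℝ) → ℝ) {f g : (Fin n → ℝ) → ℝ} {x : Fin n → ℝ}

theorem lieD_eq_fderiv_apply : lieD X f x = fderiv ℝ f x (fun j => X j x) := by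
  have hX : (fun j => X j x) = ∑ j, X j x • Pi.single j (1 : ℝ) := by
    ext i
    simp [Finset.sum_apply, Pi.single_apply]
  simp [hX, lieD, pd]

theorem lieD_coord_sub (i j : Fin n) : lieD X (fun y => y i - y j) x = X i x - X j x := by
  rw [lieD_eq_fderiv_apply, ((hasFDerivAt_apply i x).fun_sub (hasFDerivAt_apply j x)).fderiv]
  rfl

theorem lieD_const_mul_of_cofactor (hf : DifferentiableAt ℝ f x) (c : ℝ) {a : ℝ}
    (ha : lieD X f x = a * f x) : lieD X (fun y => c * f y) x = a * (c * f x) := by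
  rw [lieD_eq_fderiv_apply, fderiv_const_mul hf, smul_apply, ← lieD_eq_fderiv_apply, ha,
    smul_eq_mul]
  ring

theorem lieD_mul_of_cofactor (hf : DifferentiableAt ℝ f x) (hg : DifferentiableAt ℝ g x)
    {a b : ℝ} (ha : lieD X f x = a * f x) (hb : lieD X g x = b * g x) :
    lieD X (fun y => f y * g y) x = (a + b) * (f x * g x) := by
  rw [lieD_eq_fderiv_apply, fderiv_fun_mul hf hg, add_apply, smul_apply, smul_apply,
    ← lieD_eq_fderiv_apply, ← lieD_eq_fderiv_apply, ha, hb, smul_eq_mul, smul_eq_mul]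
  ring

theorem lieD_one_div_of_cofactor (hf : DifferentiableAt ℝ f x) (hfx : f x ≠ 0) {a : ℝ}
    (ha : lieD X f x = a * f x) : lieD X (fun y => 1 / f y) x = -a * (1 / f x) := by
  have hinv := (hasFDerivAt_inv hfx).comp x hf.hasFDerivAt
  simp only [one_div]
  rw [lieD_eq_fderiv_apply, show (fun y => (f y)⁻¹) = (fun t => t⁻¹) ∘ f from rfl, hinv.fderiv]
  simp only [ContinuousLinearMap.comp_apply, ← lieD_eq_fderiv_apply, ha]
  rw [ContinuousLinearMap.toSpanSingleton_apply, smul_eq_mul]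
  field_simp

end LieDerivative

theorem lieD_DH_sub_one_two (x : Fin 3 → ℝ) :
    lieD DH (fun y => y 1 - y 2) x = -2 * x 0 * (x 1 - x 2) := by
  rw [lieD_coord_sub]
  simp [DH]
  ring

theorem lieD_DH_sub_zero_two (x : Fin 3 → ℝ) :
    lieD DH (fun y => y 0 - y 2) x = -2 * x 1 * (x 0 - x 2) := by
  rw [lieD_coord_sub]
  simp [DH]
  ring

theorem lieD_DH_sub_zero_one (x : Fin 3 → ℝ) :
    lieD DH (fun y => y 0 - y 1) x = -2 * x 2 * (x 0 - x 1) := by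
  rw [lieD_coord_sub]
  simp [DH]
  ring

/-- The multiplier M = 1/(4(x₂−x₃)(x₁−x₃)(x₁−x₂)) satisfies
X(M) = 2(x₁+x₂+x₃)·M wherever (x₂−x₃)(x₁−x₃)(x₁−x₂) ≠ 0. -/
theorem darboux_halphen_multiplier (x : Fin 3 → ℝ)
    (hx : (x 1 - x 2) * (x 0 - x 2) * (x 0 - x 1) ≠ 0) :
    lieD DH (fun y => 1 / (4 * (y 1 - y 2) * (y 0 - y 2) * (y 0 - y 1))) x =
      2 * (x 0 + x 1 + x 2) * (1 / (4 * (x 1 - x 2) * (x 0 - x 2) * (x 0 - x 1))) := by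
  have h₁ := lieD_const_mul_of_cofactor DH (by fun_prop) 4 (lieD_DH_sub_one_two x)
  have h₂ := lieD_mul_of_cofactor DH (by fun_prop) (by fun_prop) h₁ (lieD_DH_sub_zero_two x)
  have hden := lieD_mul_of_cofactor DH (by fun_prop) (by fun_prop) h₂ (lieD_DH_sub_zero_one x)
  rw [lieD_one_div_of_cofactor DH (by fun_prop) (by simpa [mul_assoc] using hx) hden]
  ring
end

section
/- Let X be the Darboux–Halphen vector field on ℝ³. Then its divergence satisfies div X = ∂₁X₁ + ∂₂X₂ + ∂₃X₃ = −2(x₁ + x₂ + x₃) identically on ℝ³, and consequently, with M(x) = 1/(4(x₂ − x₃)(x₁ − x₃)(x₁ − x₂)), the Jacobi multiplier equation div(M·X) = ∂₁(MX₁) + ∂₂(MX₂) + ∂₃(MX₃) = 0 holds at every point where (x₂ − x₃)(x₁ − x₃)(x₁ − x₂) ≠ 0. -/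
section PartialDerivative

variable {n : ℕ} {f g : (Fin n → ℝ) → ℝ} {x : Fin n → ℝ}

theorem pd_add (hf : DifferentiableAt ℝ f x) (hg : DifferentiableAt ℝ g x) (i : Fin n) :
    pd (fun y => f y + g y) i x = pd f i x + pd g i x := by
  simp [pd, fderiv_fun_add hf hg]

theorem pd_sub (hf : DifferentiableAt ℝ f x) (hg : DifferentiableAt ℝ g x) (i : Fin n) :
    pd (fun y => f y - g y) i x = pd f i x - pd g i x := by
  simp [pd, fderiv_fun_sub hf hg]

theorem pd_mul (hf : DifferentiableAt ℝ f x) (hg : DifferentiableAt ℝ g x) (i : Fin n) :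
    pd (fun y => f y * g y) i x = f x * pd g i x + pd f i x * g x := by
  simp [pd, fderiv_fun_mul hf hg, mul_comm]

theorem pd_inv (hf : DifferentiableAt ℝ f x) (hx : f x ≠ 0) (i : Fin n) :
    pd (fun y => (f y)⁻¹) i x = -pd f i x / f x ^ 2 := by
  change fderiv ℝ ((fun t : ℝ => t⁻¹) ∘ f) x _ = _
  rw [fderiv_comp x (differentiableAt_inv hx) hf, fderiv_inv]
  simp [pd, div_eq_mul_inv, mul_comm]

theorem pd_const (c : ℝ) (i : Fin n) : pd (fun _ => c) i x = 0 := by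
  simp [pd]

theorem pd_apply (i k : Fin n) : pd (fun y => y k) i x = (Pi.single i 1 : Fin n → ℝ) k := by
  simp [pd, (hasFDerivAt_apply k x).fderiv]

end PartialDerivative

section Divergence

variable {n : ℕ}

noncomputable def divergence (Y : Fin n → (Fin n → ℝ) → ℝ) (x : Fin n → ℝ) : ℝ :=
  ∑ j, pd (Y j) j x

noncomputable def lieDeriv (Y : Fin n → (Fin n → ℝ) → ℝ) (f : (Fin n → ℝ) → ℝ)
    (x : Fin n → ℝ) : ℝ :=
  ∑ j, Y j x * pd f j x

variable {Y : Fin n → (Fin n → ℝ) → ℝ} {x : Fin n → ℝ}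

theorem divergence_mul {M : (Fin n → ℝ) → ℝ} (hM : DifferentiableAt ℝ M x)
    (hY : ∀ j, DifferentiableAt ℝ (Y j) x) :
    divergence (fun j y => M y * Y j y) x = M x * divergence Y x + lieDeriv Y M x := by
  simp only [divergence, lieDeriv, pd_mul hM (hY _), Finset.sum_add_distrib, Finset.mul_sum,
    mul_comm (pd M _ x)]

theorem lieDeriv_inv {D : (Fin n → ℝ) → ℝ} (hD : DifferentiableAt ℝ D x) (hx : D x ≠ 0) :
    lieDeriv Y (fun y => (D y)⁻¹) x = -lieDeriv Y D x / D x ^ 2 := by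
  simp only [lieDeriv, pd_inv hD hx, Finset.sum_div, neg_div, mul_div_assoc, mul_neg,
    Finset.sum_neg_distrib]

theorem divergence_one_div_mul_eq_zero {D : (Fin n → ℝ) → ℝ} (hD : DifferentiableAt ℝ D x)
    (hY : ∀ j, DifferentiableAt ℝ (Y j) x) (hx : D x ≠ 0)
    (hDarboux : lieDeriv Y D x = D x * divergence Y x) :
    divergence (fun j y => 1 / D y * Y j y) x = 0 := by
  simp only [one_div]
  rw [divergence_mul (M := fun y => (D y)⁻¹) (hD.inv hx) hY, lieDeriv_inv hD hx, hDarboux]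
  field_simp
  ring

end Divergence

theorem differentiable_DH (j : Fin 3) : Differentiable ℝ (DH j) := by
  fin_cases j <;> simp [DH] <;> fun_prop

theorem divergence_DH (x : Fin 3 → ℝ) : divergence DH x = -2 * (x 0 + x 1 + x 2) := by
  simp (disch := fun_prop) [divergence, Fin.sum_univ_three, DH, pd_add, pd_sub, pd_mul,
    pd_apply, Pi.single_apply]
  ring

theorem lieDeriv_DH_vandermonde (x : Fin 3 → ℝ) :
    lieDeriv DH (fun y => 4 * (y 1 - y 2) * (y 0 - y 2) * (y 0 - y 1)) x =
      4 * (x 1 - x 2) * (x 0 - x 2) * (x 0 - x 1) * divergence DH x := by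
  rw [divergence_DH]
  simp (disch := fun_prop) [lieDeriv, Fin.sum_univ_three, DH, pd_sub, pd_mul, pd_apply,
    pd_const, Pi.single_apply]
  ring

/-- div X = −2(x₁+x₂+x₃) on ℝ³, and div(M·X) = 0 wherever
(x₂−x₃)(x₁−x₃)(x₁−x₂) ≠ 0, where M = 1/(4(x₂−x₃)(x₁−x₃)(x₁−x₂)). -/
theorem darboux_halphen_divergence_and_jacobi_multiplier :
    (∀ x : Fin 3 → ℝ, ∑ j, pd (DH j) j x = -2 * (x 0 + x 1 + x 2)) ∧
    (∀ x : Fin 3 → ℝ, (x 1 - x 2) * (x 0 - x 2) * (x 0 - x 1) ≠ 0 →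
      ∑ j, pd (fun y => (1 / (4 * (y 1 - y 2) * (y 0 - y 2) * (y 0 - y 1))) * DH j y) j x
        = 0) := by
  refine ⟨divergence_DH, fun x hx => ?_⟩
  have hD : 4 * (x 1 - x 2) * (x 0 - x 2) * (x 0 - x 1) ≠ 0 := fun h =>
    hx (by linear_combination h / 4)
  exact divergence_one_div_mul_eq_zero (by fun_prop)
    (fun j => (differentiable_DH j).differentiableAt) hD (lieDeriv_DH_vandermonde x)
end

section
/- Let x : I → ℝ³ be a solution of the Darboux–Halphen system ẋ₁ = x₂x₃ − x₁(x₂ + x₃), ẋ₂ = x₁x₃ − x₂(x₁ + x₃), ẋ₃ = x₁x₂ − x₃(x₁ + x₂) on an open interval I ⊆ ℝ. Then the function y(t) = −2(x₁(t) + x₂(t) + x₃(t)) is three times differentiable on I and satisfies the Chazy equation y''' = 2·y·y'' − 3·(y')² on I. -/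
/-!
The elementary symmetric functions of `(x₁, x₂, x₃)` evolve along the Darboux–Halphen flow by
`σ₁' = -σ₂`, `σ₂' = -6 σ₃` and `σ₃' = σ₂² - 4 σ₁ σ₃`. Hence `y = -2 σ₁` has `y' = 2 σ₂` and
`y'' = -12 σ₃`, and the third relation is exactly the Chazy equation for `y`. Since `I` is open,
each derivative identity holds on a neighbourhood of every point, so the identities can be iterated.
-/

open Filter

theorem IsOpen.hasDerivAt_deriv {𝕜 F : Type*} [NontriviallyNormedField 𝕜] [NormedAddCommGroup F]
    [NormedSpace 𝕜 F] {I : Set 𝕜} (hI : IsOpen I) {f f' f'' : 𝕜 → F}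
    (hf : ∀ s ∈ I, HasDerivAt f (f' s) s) (hf' : ∀ s ∈ I, HasDerivAt f' (f'' s) s) :
    ∀ s ∈ I, HasDerivAt (deriv f) (f'' s) s := fun s hs =>
  (hf' s hs).congr_of_eventuallyEq <|
    eventually_of_mem (hI.mem_nhds hs) fun u hu => (hf u hu).deriv

namespace DarbouxHalphen

variable {x1 x2 x3 : ℝ → ℝ} {t : ℝ}
  (h1 : HasDerivAt x1 (x2 t * x3 t - x1 t * (x2 t + x3 t)) t)
  (h2 : HasDerivAt x2 (x1 t * x3 t - x2 t * (x1 t + x3 t)) t)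
  (h3 : HasDerivAt x3 (x1 t * x2 t - x3 t * (x1 t + x2 t)) t)
include h1 h2 h3

theorem hasDerivAt_sum :
    HasDerivAt (fun s => -2 * (x1 s + x2 s + x3 s))
      (2 * (x1 t * x2 t + x2 t * x3 t + x3 t * x1 t)) t :=
  (((h1.add h2).add h3).const_mul (-2)).congr_deriv (by ring)

theorem hasDerivAt_pairwise_sum :
    HasDerivAt (fun s => 2 * (x1 s * x2 s + x2 s * x3 s + x3 s * x1 s))
      (-12 * (x1 t * x2 t * x3 t)) t :=
  ((((h1.mul h2).add (h2.mul h3)).add (h3.mul h1)).const_mul 2).congr_deriv (by ring)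

theorem hasDerivAt_prod :
    HasDerivAt (fun s => -12 * (x1 s * x2 s * x3 s))
      (2 * (-2 * (x1 t + x2 t + x3 t)) * (-12 * (x1 t * x2 t * x3 t)) -
        3 * (2 * (x1 t * x2 t + x2 t * x3 t + x3 t * x1 t)) ^ 2) t :=
  (((h1.mul h2).mul h3).const_mul (-12)).congr_deriv (by simp only [Pi.mul_apply]; ring)

end DarbouxHalphen

/-- Along any solution of the Darboux–Halphen system on an open interval I,
the function y = −2(x₁+x₂+x₃) is three times differentiable and satisfies the
Chazy equation y''' = 2 y y'' − 3 (y')². -/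
theorem chazy_from_darboux_halphen (I : Set ℝ) (hI : IsOpen I)
    (x1 x2 x3 : ℝ → ℝ)
    (h1 : ∀ t ∈ I, HasDerivAt x1 (x2 t * x3 t - x1 t * (x2 t + x3 t)) t)
    (h2 : ∀ t ∈ I, HasDerivAt x2 (x1 t * x3 t - x2 t * (x1 t + x3 t)) t)
    (h3 : ∀ t ∈ I, HasDerivAt x3 (x1 t * x2 t - x3 t * (x1 t + x2 t)) t) :
    ∀ t ∈ I,
      DifferentiableAt ℝ (fun s => -2 * (x1 s + x2 s + x3 s)) t ∧
      DifferentiableAt ℝ (deriv fun s => -2 * (x1 s + x2 s + x3 s)) t ∧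
      DifferentiableAt ℝ (deriv (deriv fun s => -2 * (x1 s + x2 s + x3 s))) t ∧
      deriv (deriv (deriv fun s => -2 * (x1 s + x2 s + x3 s))) t =
        2 * (-2 * (x1 t + x2 t + x3 t)) *
            deriv (deriv fun s => -2 * (x1 s + x2 s + x3 s)) t -
          3 * (deriv (fun s => -2 * (x1 s + x2 s + x3 s)) t) ^ 2 := by
  have hy := fun t ht => DarbouxHalphen.hasDerivAt_sum (h1 t ht) (h2 t ht) (h3 t ht)
  have hy' := hI.hasDerivAt_deriv hy
    fun t ht => DarbouxHalphen.hasDerivAt_pairwise_sum (h1 t ht) (h2 t ht) (h3 t ht)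
  have hy'' := hI.hasDerivAt_deriv hy'
    fun t ht => DarbouxHalphen.hasDerivAt_prod (h1 t ht) (h2 t ht) (h3 t ht)
  intro t ht
  refine ⟨(hy t ht).differentiableAt, (hy' t ht).differentiableAt,
    (hy'' t ht).differentiableAt, ?_⟩
  rw [(hy'' t ht).deriv, (hy' t ht).deriv, (hy t ht).deriv]
end

section
/- In ℝ⁴, fix a = (a₁, a₂, a₃, a₄) with all aⱼ ≠ 0, and let E = Σⱼ eⱼ∂ⱼ with eⱼ(x) = −xⱼ²/aⱼ, H = 2Σⱼ xⱼ∂ⱼ, F = Σⱼ aⱼ∂ⱼ. Let M(x) = 1/(x₁²x₂²x₃²x₄²) on the open set V where x₁x₂x₃x₄ ≠ 0. Then div(M·E) = 0 at every point of V, whereas div(M·H) = −8M ≠ 0 at every point of V; in particular M is a multiplier for E but not for H. -/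
open Finset Function

section
variable {n : ℕ} {i : Fin n} {x : Fin n → ℝ}

theorem pd_eq_deriv_update {f : (Fin n → ℝ) → ℝ} (hf : DifferentiableAt ℝ f x) :
    pd f i x = deriv (fun t => f (update x i t)) (x i) :=
  ((hf.hasFDerivAt.comp_hasDerivAt_of_eq (x i) (hasDerivAt_update x i (x i))
    (update_eq_self i x).symm).deriv).symm

theorem prod_sq_update (t : ℝ) :
    ∏ k, update x i t k ^ 2 = t ^ 2 * ∏ k ∈ univ.erase i, x k ^ 2 := by
  rw [← mul_prod_erase univ _ (mem_univ i), update_self]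
  congr 1
  exact prod_congr rfl fun k hk => by rw [update_of_ne (ne_of_mem_erase hk)]

theorem pd_inv_prod_sq_mul_comp (hx : ∀ k, x k ≠ 0) {φ : ℝ → ℝ}
    (hφ : DifferentiableAt ℝ φ (x i)) :
    pd (fun y => (∏ k, y k ^ 2)⁻¹ * φ (y i)) i x =
      deriv (fun t => (t ^ 2 * ∏ k ∈ univ.erase i, x k ^ 2)⁻¹ * φ t) (x i) := by
  have hM : ∏ k, x k ^ 2 ≠ 0 := prod_ne_zero_iff.mpr fun k _ => pow_ne_zero 2 (hx k)
  have hφi : DifferentiableAt ℝ (fun y : Fin n → ℝ => φ (y i)) x := hφ.comp x (by fun_prop)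
  rw [pd_eq_deriv_update (by fun_prop (disch := exact hM))]
  simp only [prod_sq_update, update_self]

theorem pd_inv_prod_sq_mul_sq_div (hx : ∀ k, x k ≠ 0) (c : ℝ) :
    pd (fun y => (∏ k, y k ^ 2)⁻¹ * (-(y i) ^ 2 / c)) i x = 0 := by
  rw [pd_inv_prod_sq_mul_comp (φ := fun t => -t ^ 2 / c) hx (by fun_prop)]
  set P := ∏ k ∈ univ.erase i, x k ^ 2
  have hconst : (fun t => (t ^ 2 * P)⁻¹ * (-t ^ 2 / c)) =ᶠ[nhds (x i)] fun _ => -(P⁻¹ / c) := by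
    filter_upwards [eventually_ne_nhds (hx i)] with t ht
    field_simp
  rw [hconst.deriv_eq, deriv_const]

theorem pd_inv_prod_sq_mul_two_mul (hx : ∀ k, x k ≠ 0) :
    pd (fun y => (∏ k, y k ^ 2)⁻¹ * (2 * y i)) i x = -2 * (∏ k, x k ^ 2)⁻¹ := by
  rw [pd_inv_prod_sq_mul_comp (φ := fun t => 2 * t) hx (by fun_prop)]
  set P := ∏ k ∈ univ.erase i, x k ^ 2
  have hinv : (fun t => (t ^ 2 * P)⁻¹ * (2 * t)) =ᶠ[nhds (x i)] fun t => 2 * P⁻¹ * t⁻¹ := by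
    filter_upwards [eventually_ne_nhds (hx i)] with t ht
    field_simp
  rw [hinv.deriv_eq, deriv_const_mul _ (differentiableAt_inv (hx i)), deriv_inv,
    ← mul_prod_erase univ _ (mem_univ i)]
  ring

theorem sum_pd_inv_prod_sq_mul_sq_div (hx : ∀ k, x k ≠ 0) (a : Fin n → ℝ) :
    ∑ j, pd (fun y => (∏ k, y k ^ 2)⁻¹ * (-(y j) ^ 2 / a j)) j x = 0 :=
  sum_eq_zero fun j _ => pd_inv_prod_sq_mul_sq_div hx (a j)

theorem sum_pd_inv_prod_sq_mul_two_mul (hx : ∀ k, x k ≠ 0) :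
    ∑ j, pd (fun y => (∏ k, y k ^ 2)⁻¹ * (2 * y j)) j x = -2 * n * (∏ k, x k ^ 2)⁻¹ := by
  simp only [pd_inv_prod_sq_mul_two_mul hx, sum_const, card_univ, Fintype.card_fin, nsmul_eq_mul]
  ring

end

theorem multiplier_R4_general (a : Fin 4 → ℝ) (x : Fin 4 → ℝ)
    (hx : x 0 * x 1 * x 2 * x 3 ≠ 0) :
    (∑ j : Fin 4,
      pd (fun y => (1 / ((y 0) ^ 2 * (y 1) ^ 2 * (y 2) ^ 2 * (y 3) ^ 2)) *
        (-(y j) ^ 2 / a j)) j x = 0) ∧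
    (∑ j : Fin 4,
      pd (fun y => (1 / ((y 0) ^ 2 * (y 1) ^ 2 * (y 2) ^ 2 * (y 3) ^ 2)) *
        (2 * y j)) j x =
      -8 * (1 / ((x 0) ^ 2 * (x 1) ^ 2 * (x 2) ^ 2 * (x 3) ^ 2))) ∧
    -8 * (1 / ((x 0) ^ 2 * (x 1) ^ 2 * (x 2) ^ 2 * (x 3) ^ 2)) ≠ 0 := by
  have hx_ne : ∀ k, x k ≠ 0 := fun k =>
    prod_ne_zero_iff.mp (by rwa [Fin.prod_univ_four]) k (mem_univ k)
  have hM : ∀ y : Fin 4 → ℝ,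
      1 / (y 0 ^ 2 * y 1 ^ 2 * y 2 ^ 2 * y 3 ^ 2) = (∏ k, y k ^ 2)⁻¹ := by
    simp [Fin.prod_univ_four]
  simp only [hM]
  refine ⟨sum_pd_inv_prod_sq_mul_sq_div hx_ne a, ?_, ?_⟩
  · rw [sum_pd_inv_prod_sq_mul_two_mul hx_ne]
    norm_num
  · exact mul_ne_zero (by norm_num)
      (inv_ne_zero (prod_ne_zero_iff.mpr fun k _ => pow_ne_zero 2 (hx_ne k)))

/-- In ℝ⁴ with eⱼ = −xⱼ²/aⱼ (all aⱼ ≠ 0), H = 2Σxⱼ∂ⱼ and M = 1/(x₁²x₂²x₃²x₄²),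
on the set x₁x₂x₃x₄ ≠ 0 we have div(M·E) = 0 while div(M·H) = −8M ≠ 0;
so M is a Jacobi multiplier for E but not for H. -/
theorem multiplier_R4 (a : Fin 4 → ℝ) (ha : ∀ j, a j ≠ 0) (x : Fin 4 → ℝ)
    (hx : x 0 * x 1 * x 2 * x 3 ≠ 0) :
    (∑ j : Fin 4,
      pd (fun y => (1 / ((y 0) ^ 2 * (y 1) ^ 2 * (y 2) ^ 2 * (y 3) ^ 2)) *
        (-(y j) ^ 2 / a j)) j x = 0) ∧
    (∑ j : Fin 4,
      pd (fun y => (1 / ((y 0) ^ 2 * (y 1) ^ 2 * (y 2) ^ 2 * (y 3) ^ 2)) *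
        (2 * y j)) j x =
      -8 * (1 / ((x 0) ^ 2 * (x 1) ^ 2 * (x 2) ^ 2 * (x 3) ^ 2))) ∧
    -8 * (1 / ((x 0) ^ 2 * (x 1) ^ 2 * (x 2) ^ 2 * (x 3) ^ 2)) ≠ 0 :=
  multiplier_R4_general a x hx
end
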